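/- Let K be a compact subset of the Poincaré disk B² and φ: S¹ → S² a homeomorphism onto its image. Then there is a compact subset L of the Poincaré ball B³ such that for every geodesic γ of B² intersecting K with endpoints u, v ∈ S¹, the geodesic of B³ with endpoints φ(u), φ(v) intersects L. -/

import Mathlib

/-!
On a geodesic of the Poincaré ball with endpoints `u, v`, letting both ends run to infinity in
the distance formula gives `‖u - v‖ (1 - ‖x‖²) = 2 ‖u - x‖ ‖v - x‖` for every point `x` of it.
So a geodesic through `K ⊆ ball 0 r` has endpoints at distance at least `1 - r`, and by
compactness and injectivity `φ` sends such pairs to pairs at distance at least some `δ > 0`.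
At the point of a geodesic equidistant from its endpoints the same identity gives
`‖x‖ ≤ 1 - ‖u - v‖ / 4`, so every image geodesic meets the closed ball of radius `1 - δ / 4`.
-/

open Filter Set

/-- The hyperbolic (Poincaré) distance on the open unit ball of a Euclidean space. -/
noncomputable def hDist {E : Type*} [NormedAddCommGroup E] (x y : E) : ℝ :=
  2 * Real.arsinh (‖x - y‖ / Real.sqrt ((1 - ‖x‖ ^ 2) * (1 - ‖y‖ ^ 2)))

/-- A (complete, unit-speed) geodesic line of the Poincaré ball model. -/
def IsHypLine {E : Type*} [NormedAddCommGroup E] (f : ℝ → E) : Prop :=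
  (∀ t, ‖f t‖ < 1) ∧ ∀ s t, hDist (f s) (f t) = |s - t|

open Real Topology

theorem tendsto_sinh_half_sq_atTop : Tendsto (fun s : ℝ => sinh (s / 2) ^ 2) atTop atTop := by
  have hsinh : Tendsto sinh atTop atTop :=
    tendsto_atTop_mono' atTop ((eventually_ge_atTop 0).mono fun _ => self_le_sinh_iff.2) tendsto_id
  exact (tendsto_pow_atTop two_ne_zero).comp (hsinh.comp (tendsto_id.atTop_div_const two_pos))

theorem IsCompact.exists_pos_le_dist_of_injOn {X Y : Type*} [PseudoMetricSpace X] [MetricSpace Y]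
    {S : Set X} (hS : IsCompact S) {g : X → Y} (hg : ContinuousOn g S) (hinj : InjOn g S)
    {ε : ℝ} (hε : 0 < ε) :
    ∃ δ > 0, ∀ x ∈ S, ∀ y ∈ S, ε ≤ dist x y → δ ≤ dist (g x) (g y) := by
  let T := S ×ˢ S ∩ {p | ε ≤ dist p.1 p.2}
  have hT : IsCompact T := (hS.prod hS).inter_right (isClosed_le continuous_const continuous_dist)
  have hgT : ContinuousOn (fun p : X × X => dist (g p.1) (g p.2)) T :=
    continuous_dist.comp_continuousOn <| (hg.comp continuousOn_fst fun _ hp => hp.1.1).prodMk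
      (hg.comp continuousOn_snd fun _ hp => hp.1.2)
  have hpos : ∀ p ∈ T, 0 < dist (g p.1) (g p.2) := fun p ⟨⟨h1, h2⟩, hp⟩ =>
    dist_pos.2 fun h => (hε.trans_le hp).ne' (by rw [hinj h1 h2 h, dist_self])
  obtain ⟨δ, hδ, hδT⟩ := hT.exists_forall_le' hgT hpos
  exact ⟨δ, hδ, fun x hx y hy hxy => hδT (x, y) ⟨⟨hx, hy⟩, hxy⟩⟩

namespace IsHypLine

variable {E : Type*} [NormedAddCommGroup E] {f : ℝ → E} {u v : E}

theorem one_sub_norm_sq_pos (hf : IsHypLine f) (t : ℝ) : 0 < 1 - ‖f t‖ ^ 2 := by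
  nlinarith [hf.1 t, norm_nonneg (f t)]

theorem norm_sub_sq (hf : IsHypLine f) (s t : ℝ) :
    ‖f s - f t‖ ^ 2 = sinh ((s - t) / 2) ^ 2 * ((1 - ‖f s‖ ^ 2) * (1 - ‖f t‖ ^ 2)) := by
  have hprod := mul_pos (hf.one_sub_norm_sq_pos s) (hf.one_sub_norm_sq_pos t)
  have harsinh : arsinh (‖f s - f t‖ / √((1 - ‖f s‖ ^ 2) * (1 - ‖f t‖ ^ 2))) =
      |(s - t) / 2| := by
    have := hf.2 s t
    rw [hDist] at this
    rw [abs_div, abs_two]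
    linarith
  have hq : ‖f s - f t‖ / √((1 - ‖f s‖ ^ 2) * (1 - ‖f t‖ ^ 2)) = |sinh ((s - t) / 2)| := by
    rw [abs_sinh, ← harsinh, sinh_arsinh]
  rw [← sq_abs (sinh _), ← hq, div_pow, sq_sqrt hprod.le, div_mul_cancel₀ _ hprod.ne']

theorem norm_sub_le_abs_sinh (hf : IsHypLine f) (s t : ℝ) :
    ‖f s - f t‖ ≤ |sinh ((s - t) / 2)| := by
  have h1 := hf.one_sub_norm_sq_pos s
  have h2 := hf.one_sub_norm_sq_pos t
  have hle : ‖f s - f t‖ ^ 2 ≤ sinh ((s - t) / 2) ^ 2 := by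
    rw [hf.norm_sub_sq]
    refine mul_le_of_le_one_right (sq_nonneg _) ?_
    nlinarith [sq_nonneg ‖f s‖, sq_nonneg ‖f t‖]
  simpa using sq_le_sq.1 hle

protected theorem continuous (hf : IsHypLine f) : Continuous f := by
  refine continuous_iff_continuousAt.2 fun t => tendsto_iff_norm_sub_tendsto_zero.2 ?_
  refine squeeze_zero (fun _ => norm_nonneg _) (fun s => hf.norm_sub_le_abs_sinh s t) ?_
  have : Continuous fun s => |sinh ((s - t) / 2)| := by fun_prop
  simpa using this.tendsto t

theorem comp_neg (hf : IsHypLine f) : IsHypLine fun t => f (-t) :=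
  ⟨fun t => hf.1 (-t), fun s t => by rw [hf.2, abs_sub_comm]; ring_nf⟩

theorem one_sub_norm_sq_le (hf : IsHypLine f) {s : ℝ} (hs : s ≠ 0) :
    1 - ‖f s‖ ^ 2 ≤ 4 / (1 - ‖f 0‖ ^ 2) * (sinh (s / 2) ^ 2)⁻¹ := by
  have h0 := hf.one_sub_norm_sq_pos 0
  have hsinh : 0 < sinh (s / 2) ^ 2 := by positivity
  have hfar : ‖f s - f 0‖ ≤ 2 := (norm_sub_le _ _).trans (by linarith [hf.1 s, hf.1 0])
  have hsq := hf.norm_sub_sq s 0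
  rw [sub_zero] at hsq
  rw [← div_eq_mul_inv, le_div_iff₀ hsinh, le_div_iff₀ h0]
  nlinarith [norm_nonneg (f s - f 0)]

theorem norm_eq_one_of_tendsto_atTop (hf : IsHypLine f) (hu : Tendsto f atTop (𝓝 u)) :
    ‖u‖ = 1 := by
  have hbound : Tendsto (fun s => 4 / (1 - ‖f 0‖ ^ 2) * (sinh (s / 2) ^ 2)⁻¹) atTop (𝓝 0) := by
    simpa using tendsto_sinh_half_sq_atTop.inv_tendsto_atTop.const_mul (4 / (1 - ‖f 0‖ ^ 2))
  have hzero : Tendsto (fun s => 1 - ‖f s‖ ^ 2) atTop (𝓝 0) :=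
    squeeze_zero' (.of_forall fun s => (hf.one_sub_norm_sq_pos s).le)
      ((eventually_ne_atTop 0).mono fun _ => hf.one_sub_norm_sq_le) hbound
  have hsq : 1 - ‖u‖ ^ 2 = 0 :=
    tendsto_nhds_unique (tendsto_const_nhds.sub (hu.norm.pow 2)) hzero
  exact (pow_eq_one_iff_of_nonneg (norm_nonneg u) two_ne_zero).1 (by linarith)

theorem norm_eq_one_of_tendsto_atBot (hf : IsHypLine f) (hv : Tendsto f atBot (𝓝 v)) :
    ‖v‖ = 1 :=
  hf.comp_neg.norm_eq_one_of_tendsto_atTop (hv.comp tendsto_neg_atTop_atBot)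

theorem norm_sub_sq_mul_sq_eq (hf : IsHypLine f) (t₀ : ℝ) {s : ℝ} (hs : s ≠ 0) :
    ‖f (t₀ + s) - f (t₀ - s)‖ ^ 2 * (1 - ‖f t₀‖ ^ 2) ^ 2 =
      4 * (1 + (sinh (s / 2) ^ 2)⁻¹) * (‖f (t₀ + s) - f t₀‖ ^ 2 * ‖f (t₀ - s) - f t₀‖ ^ 2) := by
  have hsinh : sinh (s / 2) ≠ 0 := by simpa using hs
  have hdouble : sinh ((t₀ + s - (t₀ - s)) / 2) = 2 * sinh (s / 2) * cosh (s / 2) := by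
    rw [← sinh_two_mul]; ring_nf
  rw [hf.norm_sub_sq, hf.norm_sub_sq, hf.norm_sub_sq, hdouble, show t₀ + s - t₀ = s by ring,
    show t₀ - s - t₀ = -s by ring, neg_div, sinh_neg, neg_sq]
  field_simp
  rw [cosh_sq']
  ring

theorem norm_sub_mul_one_sub_norm_sq (hf : IsHypLine f) (hu : Tendsto f atTop (𝓝 u))
    (hv : Tendsto f atBot (𝓝 v)) (t₀ : ℝ) :
    ‖u - v‖ * (1 - ‖f t₀‖ ^ 2) = 2 * (‖u - f t₀‖ * ‖v - f t₀‖) := by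
  have hplus : Tendsto (fun s => f (t₀ + s)) atTop (𝓝 u) :=
    hu.comp (tendsto_atTop_add_const_left atTop t₀ tendsto_id)
  have hminus : Tendsto (fun s => f (t₀ - s)) atTop (𝓝 v) :=
    hv.comp (tendsto_atBot_add_const_left atTop t₀ tendsto_neg_atTop_atBot)
  have hcoef : Tendsto (fun s => 4 * (1 + (sinh (s / 2) ^ 2)⁻¹)) atTop (𝓝 4) := by
    simpa using (tendsto_sinh_half_sq_atTop.inv_tendsto_atTop.const_add 1).const_mul 4
  have hlim := hcoef.mul (((hplus.sub_const (f t₀)).norm.pow 2).mul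
    ((hminus.sub_const (f t₀)).norm.pow 2))
  have hsq : ‖u - v‖ ^ 2 * (1 - ‖f t₀‖ ^ 2) ^ 2 = 4 * (‖u - f t₀‖ ^ 2 * ‖v - f t₀‖ ^ 2) :=
    tendsto_nhds_unique (((hplus.sub hminus).norm.pow 2).mul_const _) <| hlim.congr' <|
      (eventually_ne_atTop 0).mono fun s hs => (hf.norm_sub_sq_mul_sq_eq t₀ hs).symm
  have hpos := hf.one_sub_norm_sq_pos t₀
  exact (sq_eq_sq₀ (by positivity) (by positivity)).1 (by linear_combination hsq)

theorem one_sub_norm_le_norm_sub (hf : IsHypLine f) (hu : Tendsto f atTop (𝓝 u))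
    (hv : Tendsto f atBot (𝓝 v)) (t : ℝ) : 1 - ‖f t‖ ≤ ‖u - v‖ := by
  have hid := hf.norm_sub_mul_one_sub_norm_sq hu hv t
  have hut : 1 - ‖f t‖ ≤ ‖u - f t‖ := by
    simpa [hf.norm_eq_one_of_tendsto_atTop hu] using norm_sub_norm_le u (f t)
  have hvt : 1 - ‖f t‖ ≤ ‖v - f t‖ := by
    simpa [hf.norm_eq_one_of_tendsto_atBot hv] using norm_sub_norm_le v (f t)
  nlinarith [hf.1 t, norm_nonneg (f t), norm_nonneg (u - v),
    mul_le_mul hut hvt (by linarith [hf.1 t]) (norm_nonneg _)]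

theorem exists_equidistant (hf : IsHypLine f) (hu : Tendsto f atTop (𝓝 u))
    (hv : Tendsto f atBot (𝓝 v)) (huv : u ≠ v) : ∃ t, ‖u - f t‖ = ‖v - f t‖ := by
  let g t := ‖u - f t‖ - ‖v - f t‖
  have hg : Continuous g := by have := hf.continuous; fun_prop
  have hd : 0 < ‖u - v‖ := norm_pos_iff.2 (sub_ne_zero.2 huv)
  have htop : Tendsto g atTop (𝓝 (-‖u - v‖)) := by
    simpa [g, norm_sub_rev v u] using ((hu.const_sub u).norm).sub (hu.const_sub v).norm
  have hbot : Tendsto g atBot (𝓝 ‖u - v‖) := by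
    simpa [g] using ((hv.const_sub u).norm).sub (hv.const_sub v).norm
  obtain ⟨a, ha⟩ := (htop.eventually (gt_mem_nhds (neg_neg_iff_pos.2 hd))).exists
  obtain ⟨b, hb⟩ := (hbot.eventually (lt_mem_nhds hd)).exists
  obtain ⟨t, ht⟩ := intermediate_value_univ a b hg ⟨ha.le, hb.le⟩
  exact ⟨t, sub_eq_zero.1 ht⟩

theorem exists_norm_le (hf : IsHypLine f) (hu : Tendsto f atTop (𝓝 u))
    (hv : Tendsto f atBot (𝓝 v)) : ∃ t, ‖f t‖ ≤ 1 - ‖u - v‖ / 4 := by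
  rcases eq_or_ne u v with rfl | huv
  · exact ⟨0, by simpa using (hf.1 0).le⟩
  obtain ⟨t, ht⟩ := hf.exists_equidistant hu hv huv
  have hid := hf.norm_sub_mul_one_sub_norm_sq hu hv t
  have htri : ‖u - v‖ ≤ 2 * ‖u - f t‖ := by
    simpa [ht, two_mul, norm_sub_rev (f t) v] using norm_sub_le_norm_sub_add_norm_sub u (f t) v
  have hd : 0 < ‖u - v‖ := norm_pos_iff.2 (sub_ne_zero.2 huv)
  have hdeep : ‖u - v‖ / 2 ≤ 1 - ‖f t‖ ^ 2 := by
    refine le_of_mul_le_mul_left ?_ hd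
    nlinarith [mul_le_mul htri htri hd.le (by positivity)]
  exact ⟨t, by nlinarith [hf.1 t, norm_nonneg (f t)]⟩

end IsHypLine

theorem image_geodesics_meet_compact_general
    (K : Set (EuclideanSpace ℝ (Fin 2))) (hK : IsCompact K)
    (hK1 : K ⊆ Metric.ball (0 : EuclideanSpace ℝ (Fin 2)) 1)
    (φ : EuclideanSpace ℝ (Fin 2) → EuclideanSpace ℝ (Fin 3))
    (hφc : ContinuousOn φ (Metric.sphere (0 : EuclideanSpace ℝ (Fin 2)) 1))
    (hφi : InjOn φ (Metric.sphere (0 : EuclideanSpace ℝ (Fin 2)) 1)) :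
    ∃ L : Set (EuclideanSpace ℝ (Fin 3)), IsCompact L ∧
      L ⊆ Metric.ball (0 : EuclideanSpace ℝ (Fin 3)) 1 ∧
      ∀ (f : ℝ → EuclideanSpace ℝ (Fin 2)) (u v : EuclideanSpace ℝ (Fin 2)),
        IsHypLine f → Tendsto f atTop (nhds u) → Tendsto f atBot (nhds v) →
        (Set.range f ∩ K).Nonempty →
        ∀ h : ℝ → EuclideanSpace ℝ (Fin 3), IsHypLine h →
          Tendsto h atTop (nhds (φ u)) → Tendsto h atBot (nhds (φ v)) →
          (Set.range h ∩ L).Nonempty := by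
  obtain ⟨r, hr, hKr⟩ := exists_lt_subset_ball hK.isClosed hK1
  obtain ⟨δ, hδ, hφδ⟩ :=
    (isCompact_sphere (0 : EuclideanSpace ℝ (Fin 2)) 1).exists_pos_le_dist_of_injOn hφc hφi
      (sub_pos.2 hr)
  refine ⟨Metric.closedBall 0 (1 - δ / 4), isCompact_closedBall _ _,
    Metric.closedBall_subset_ball (by linarith), ?_⟩
  rintro f u v hf hu hv ⟨_, ⟨t₀, rfl⟩, ht₀⟩ h hh hφu hφv
  have hsep : 1 - r ≤ dist u v := by
    have := hf.one_sub_norm_le_norm_sub hu hv t₀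
    have := mem_ball_zero_iff.1 (hKr ht₀)
    rw [dist_eq_norm]; linarith
  have hφsep : δ ≤ ‖φ u - φ v‖ := by
    simpa [dist_eq_norm] using hφδ u (by simpa using hf.norm_eq_one_of_tendsto_atTop hu)
      v (by simpa using hf.norm_eq_one_of_tendsto_atBot hv) hsep
  obtain ⟨t, ht⟩ := hh.exists_norm_le hφu hφv
  exact ⟨h t, mem_range_self t, mem_closedBall_zero_iff.2 (by linarith)⟩

/-- Let `K` be a compact subset of the Poincaré disk `B²` and
`φ : S¹ → S²` a homeomorphism onto its image (a continuous injection of the compact circle).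
Then there is a compact `L ⊆ B³` such that for every geodesic of `B²` meeting `K` with
endpoints `u, v`, the geodesic of `B³` with endpoints `φ(u), φ(v)` meets `L`. -/
theorem image_geodesics_meet_compact
    (K : Set (EuclideanSpace ℝ (Fin 2))) (hK : IsCompact K)
    (hK1 : K ⊆ Metric.ball (0 : EuclideanSpace ℝ (Fin 2)) 1)
    (φ : EuclideanSpace ℝ (Fin 2) → EuclideanSpace ℝ (Fin 3))
    (hφc : ContinuousOn φ (Metric.sphere (0 : EuclideanSpace ℝ (Fin 2)) 1))
    (hφi : InjOn φ (Metric.sphere (0 : EuclideanSpace ℝ (Fin 2)) 1))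
    (hφs : MapsTo φ (Metric.sphere (0 : EuclideanSpace ℝ (Fin 2)) 1)
      (Metric.sphere (0 : EuclideanSpace ℝ (Fin 3)) 1)) :
    ∃ L : Set (EuclideanSpace ℝ (Fin 3)), IsCompact L ∧
      L ⊆ Metric.ball (0 : EuclideanSpace ℝ (Fin 3)) 1 ∧
      ∀ (f : ℝ → EuclideanSpace ℝ (Fin 2)) (u v : EuclideanSpace ℝ (Fin 2)),
        IsHypLine f → Tendsto f atTop (nhds u) → Tendsto f atBot (nhds v) →
        (Set.range f ∩ K).Nonempty →
        ∀ h : ℝ → EuclideanSpace ℝ (Fin 3), IsHypLine h →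
          Tendsto h atTop (nhds (φ u)) → Tendsto h atBot (nhds (φ v)) →
          (Set.range h ∩ L).Nonempty :=
  image_geodesics_meet_compact_general K hK hK1 φ hφc hφi
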